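/- Let m ≥ 2 be a natural number and let s ∈ ℂ satisfy Re(s) > m/2. Then (∏_{i=0}^{m-2} Λ(2s - i)/Λ(2s + m - 1 - 2i)) · (∏_{i=0}^{m-2} Λ(-2s - i)/Λ(-2s + m - 1 - 2i)) = 1, where Λ is the completed Riemann zeta function; i.e., the function β_m(s) = ∏_{i=0}^{m-2} Λ(2s-i)/Λ(2s+m-1-2i) satisfies β_m(s)·β_m(-s) = 1 for Re(s) > m/2. -/

import Mathlib

open Complex Finset

/-!
Write `m = n + 1` and `a = 2s + 1 - n`. Reflecting `i ↦ n - 1 - i` gives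
`β(s) = ∏_{k<n} Λ(a + k) / Λ(a + 2k + 1)`, and the functional equation `Λ(1 - z) = Λ(z)` gives
`β(-s) = ∏_{k<n} Λ(a + n + k) / Λ(a + 2k)`. In the product the numerators and the denominators
both run over `Λ(a + j)` for `j < 2n`, all of which are nonzero because `Re a > 1`.
-/

theorem Finset.prod_range_two_mul {M : Type*} [CommMonoid M] (f : ℕ → M) (n : ℕ) :
    ∏ j ∈ range (2 * n), f j = (∏ i ∈ range n, f (2 * i)) * ∏ i ∈ range n, f (2 * i + 1) := by
  induction n with
  | zero => simp
  | succ n ih =>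
    rw [show 2 * (n + 1) = 2 * n + 1 + 1 by ring, prod_range_succ, prod_range_succ, ih,
      prod_range_succ, prod_range_succ, mul_assoc, mul_mul_mul_comm]

theorem prod_div_mul_prod_div_eq_one {G₀ : Type*} [CommGroupWithZero G₀] (f : ℕ → G₀) (n : ℕ)
    (hf : ∀ k < 2 * n, f k ≠ 0) :
    (∏ k ∈ range n, f k / f (2 * k + 1)) * ∏ k ∈ range n, f (n + k) / f (2 * k) = 1 := by
  rw [prod_div_distrib, prod_div_distrib, div_mul_div_comm, ← prod_range_add, ← two_mul,
    mul_comm (∏ k ∈ range n, f (2 * k + 1)), ← prod_range_two_mul]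
  exact div_self <| prod_ne_zero_iff.mpr fun k hk => hf k (mem_range.mp hk)

theorem completedRiemannZeta_ne_zero_of_one_lt_re {s : ℂ} (hs : 1 < s.re) :
    completedRiemannZeta s ≠ 0 := by
  have hs₀ : s ≠ 0 := by rintro rfl; norm_num at hs
  intro h
  apply riemannZeta_ne_zero_of_one_lt_re hs
  rw [riemannZeta_def_of_ne_zero hs₀, h, zero_div]

/-- The factor `β_m` of the paper, for `F = ℚ`, where `ξ = Λ`. -/
noncomputable def sphericalBeta (m : ℕ) (s : ℂ) : ℂ :=
  ∏ i ∈ range (m - 1),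
    completedRiemannZeta (2 * s - i) / completedRiemannZeta (2 * s + m - 1 - 2 * i)

theorem sphericalBeta_succ (n : ℕ) (s : ℂ) :
    sphericalBeta (n + 1) s = ∏ k ∈ range n,
      completedRiemannZeta (2 * s + 1 - n + k) /
        completedRiemannZeta (2 * s + 1 - n + (2 * k + 1 : ℕ)) := by
  rw [sphericalBeta, Nat.add_sub_cancel, ← prod_range_reflect]
  refine prod_congr rfl fun i hi => ?_
  have hcast : ((n - 1 - i : ℕ) : ℂ) = n - 1 - i := by
    rw [Nat.cast_sub (by grind), Nat.cast_sub (by grind), Nat.cast_one]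
  push_cast [hcast]
  ring_nf

theorem sphericalBeta_succ_neg (n : ℕ) (s : ℂ) :
    sphericalBeta (n + 1) (-s) = ∏ k ∈ range n,
      completedRiemannZeta (2 * s + 1 - n + (n + k : ℕ)) /
        completedRiemannZeta (2 * s + 1 - n + (2 * k : ℕ)) := by
  rw [sphericalBeta, Nat.add_sub_cancel]
  refine prod_congr rfl fun i _ => ?_
  congr 1 <;> rw [← completedRiemannZeta_one_sub] <;> push_cast <;> ring_nf

theorem beta_mul_beta_neg_general (m : ℕ) (s : ℂ) (hs : (m : ℝ) / 2 < s.re) :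
    (∏ i ∈ Finset.range (m - 1),
      completedRiemannZeta (2 * s - (i : ℂ)) /
        completedRiemannZeta (2 * s + (m : ℂ) - 1 - 2 * (i : ℂ))) *
    (∏ i ∈ Finset.range (m - 1),
      completedRiemannZeta (2 * (-s) - (i : ℂ)) /
        completedRiemannZeta (2 * (-s) + (m : ℂ) - 1 - 2 * (i : ℂ))) = 1 := by
  obtain _ | n := m
  · simp
  change sphericalBeta (n + 1) s * sphericalBeta (n + 1) (-s) = 1
  rw [sphericalBeta_succ, sphericalBeta_succ_neg]
  refine prod_div_mul_prod_div_eq_one (fun k : ℕ => completedRiemannZeta (2 * s + 1 - n + k)) n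
    fun k _ => completedRiemannZeta_ne_zero_of_one_lt_re ?_
  push_cast at hs
  simp only [add_re, sub_re, mul_re, natCast_re, one_re, re_ofNat, im_ofNat]
  nlinarith [(Nat.cast_nonneg k : (0 : ℝ) ≤ k)]

/-- Spherical instance of `M_m(-s) ∘ M_m(s) = 1`: the factor
`β_m(s) = ∏_{i=0}^{m-2} Λ(2s-i)/Λ(2s+m-1-2i)` satisfies `β_m(s)·β_m(-s) = 1`
for `Re(s) > m/2`. -/
theorem beta_mul_beta_neg (m : ℕ) (hm : 2 ≤ m) (s : ℂ) (hs : (m : ℝ) / 2 < s.re) :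
    (∏ i ∈ Finset.range (m - 1),
      completedRiemannZeta (2 * s - (i : ℂ)) /
        completedRiemannZeta (2 * s + (m : ℂ) - 1 - 2 * (i : ℂ))) *
    (∏ i ∈ Finset.range (m - 1),
      completedRiemannZeta (2 * (-s) - (i : ℂ)) /
        completedRiemannZeta (2 * (-s) + (m : ℂ) - 1 - 2 * (i : ℂ))) = 1 :=
  beta_mul_beta_neg_general m s hs
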